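/- Fix r ≥ 0 and indices b, c, f_1, …, f_r ∈ {1, …, n+4}. If the functions R^î_{ĵ, b, c; f_1; …; f_r} vanish identically on ℝ^{n+4} for all î, ĵ ∈ {3, …, n+2}, then for every f ∈ {1, …, n+4} the functions R^î_{ĵ, b, c; f_1; …; f_r; f} also vanish identically for all î, ĵ ∈ {3, …, n+2}. -/

import Mathlib

namespace HolPaper

open Matrix

/-- Points of `ℝ^{n+4}`, with coordinates indexed by `Fin (n+4)`.
The paper's index `1` is `p1`, `2` is `p2`, `î ∈ {3,…,n+2}` is `ehat i` for `i : Fin n`,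
`n+3` is `q1` and `n+4` is `q2`. -/
abbrev Pt (n : ℕ) := Fin (n + 4) → ℝ

def p1 (n : ℕ) : Fin (n + 4) := ⟨0, by omega⟩
def p2 (n : ℕ) : Fin (n + 4) := ⟨1, by omega⟩
def ehat {n : ℕ} (i : Fin n) : Fin (n + 4) := ⟨i.1 + 2, by have := i.isLt; omega⟩
def q1 (n : ℕ) : Fin (n + 4) := ⟨n + 2, by omega⟩
def q2 (n : ℕ) : Fin (n + 4) := ⟨n + 3, by omega⟩

noncomputable section

variable {n N : ℕ}

/-- `u^î(x) = Σ_ĵ Σ_α (A_α)_{î-2,ĵ-2} x^ĵ (x^{n+3})^α`. -/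
def u (A : Fin N → Matrix (Fin n) (Fin n) ℝ) (i : Fin n) (x : Pt n) : ℝ :=
  ∑ j : Fin n, ∑ α : Fin N, A α i j * x (ehat j) * x (q1 n) ^ (α.1 + 1)

/-- `F(x) = Σ_î (x^î)²`. -/
def Fq (n : ℕ) (x : Pt n) : ℝ := ∑ i : Fin n, x (ehat i) ^ 2

/-- The Gram matrix `G(x)` of the metric. -/
def Gmet (A : Fin N → Matrix (Fin n) (Fin n) ℝ) (x : Pt n) :
    Matrix (Fin (n + 4)) (Fin (n + 4)) ℝ := fun a b =>
  (if (a = p1 n ∧ b = q1 n) ∨ (a = q1 n ∧ b = p1 n) then (1 : ℝ) else 0)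
  + (if (a = p2 n ∧ b = q2 n) ∨ (a = q2 n ∧ b = p2 n) then (1 : ℝ) else 0)
  + (∑ i : Fin n, if a = ehat i ∧ b = ehat i then (1 : ℝ) else 0)
  + (∑ i : Fin n, if (a = ehat i ∧ b = q2 n) ∨ (a = q2 n ∧ b = ehat i) then u A i x else 0)
  + (if (a = q1 n ∧ b = q1 n) ∨ (a = q2 n ∧ b = q2 n) then Fq n x else 0)

/-- Partial derivative `∂_b f` of a function on `ℝ^{n+4}`. -/
def pd (b : Fin (n + 4)) (f : Pt n → ℝ) (x : Pt n) : ℝ :=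
  fderiv ℝ f x (Pi.single b 1)

/-- Christoffel symbols
`Γ^a_{bc} = ½ Σ_d G^{ad} (∂_b G_{dc} + ∂_c G_{bd} − ∂_d G_{bc})`. -/
def Γchr (A : Fin N → Matrix (Fin n) (Fin n) ℝ) (a b c : Fin (n + 4)) (x : Pt n) : ℝ :=
  (1 / 2) * ∑ d : Fin (n + 4), (Gmet A x)⁻¹ a d *
    (pd b (fun y => Gmet A y d c) x + pd c (fun y => Gmet A y b d) x
      - pd d (fun y => Gmet A y b c) x)

/-- Curvature components
`R^a_{b,c,d} = ∂_c Γ^a_{db} − ∂_d Γ^a_{cb} + Σ_e (Γ^a_{ce} Γ^e_{db} − Γ^a_{de} Γ^e_{cb})`. -/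
def Rcurv (A : Fin N → Matrix (Fin n) (Fin n) ℝ) (a b c d : Fin (n + 4)) (x : Pt n) : ℝ :=
  pd c (Γchr A a d b) x - pd d (Γchr A a c b) x
  + ∑ e : Fin (n + 4), (Γchr A a c e x * Γchr A e d b x - Γchr A a d e x * Γchr A e c b x)

/-- Auxiliary recursion for iterated covariant derivatives of the curvature; the list of
differentiation indices is stored in *reverse* order (most recent derivative first). -/
def covRAux (A : Fin N → Matrix (Fin n) (Fin n) ℝ) :
    Fin (n + 4) → Fin (n + 4) → Fin (n + 4) → Fin (n + 4) → List (Fin (n + 4)) → Pt n → ℝ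
  | a, b, c, d, [], x => Rcurv A a b c d x
  | a, b, c, d, f :: fs, x =>
      pd f (covRAux A a b c d fs) x
      + ∑ l : Fin (n + 4), Γchr A a f l x * covRAux A l b c d fs x
      - ∑ l : Fin (n + 4), Γchr A l f b x * covRAux A a l c d fs x
      - ∑ l : Fin (n + 4), Γchr A l f c x * covRAux A a b l d fs x
      - ∑ l : Fin (n + 4), Γchr A l f d x * covRAux A a b c l fs x
      - ∑ s : Fin fs.length, ∑ l : Fin (n + 4),
          Γchr A l f (fs.get s) x * covRAux A a b c d (fs.set s l) x
  termination_by a b c d fs => fs.length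
  decreasing_by all_goals simp [List.length_set]

/-- `covR A a b c d [f_1, …, f_r] x` is the component `R^a_{b,c,d;f_1;…;f_r}(x)` of the
`r`-th covariant derivative of the curvature tensor (indices in natural order). -/
def covR (A : Fin N → Matrix (Fin n) (Fin n) ℝ) (a b c d : Fin (n + 4))
    (fs : List (Fin (n + 4))) (x : Pt n) : ℝ :=
  covRAux A a b c d fs.reverse x


section Aux
variable {n N : ℕ}

/-! ### Index bookkeeping -/

lemma ehat_lt (i : Fin n) : (i : ℕ) < n := i.isLt

@[simp] lemma ehat_inj {i j : Fin n} : (ehat i = ehat j) ↔ i = j := by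
  constructor
  · intro h; ext
    have := congrArg Fin.val h
    simpa [ehat] using this
  · rintro rfl; rfl

@[simp] lemma ehat_ne_p1 (i : Fin n) : ehat i ≠ p1 n := by
  simp [ehat, p1, Fin.ext_iff]
@[simp] lemma p1_ne_ehat (i : Fin n) : p1 n ≠ ehat i := (ehat_ne_p1 i).symm
@[simp] lemma ehat_ne_p2 (i : Fin n) : ehat i ≠ p2 n := by
  simp [ehat, p2, Fin.ext_iff]
@[simp] lemma p2_ne_ehat (i : Fin n) : p2 n ≠ ehat i := (ehat_ne_p2 i).symm
@[simp] lemma ehat_ne_q1 (i : Fin n) : ehat i ≠ q1 n := by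
  have := i.isLt; simp [ehat, q1, Fin.ext_iff]; omega
@[simp] lemma q1_ne_ehat (i : Fin n) : q1 n ≠ ehat i := (ehat_ne_q1 i).symm
@[simp] lemma ehat_ne_q2 (i : Fin n) : ehat i ≠ q2 n := by
  have := i.isLt; simp [ehat, q2, Fin.ext_iff]; omega
@[simp] lemma q2_ne_ehat (i : Fin n) : q2 n ≠ ehat i := (ehat_ne_q2 i).symm
@[simp] lemma p1_ne_p2 : p1 n ≠ p2 n := by simp [p1, p2, Fin.ext_iff]
@[simp] lemma p2_ne_p1 : p2 n ≠ p1 n := by simp [p1, p2, Fin.ext_iff]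
@[simp] lemma p1_ne_q1 : p1 n ≠ q1 n := by simp [p1, q1, Fin.ext_iff]
@[simp] lemma q1_ne_p1 : q1 n ≠ p1 n := by simp [p1, q1, Fin.ext_iff]
@[simp] lemma p1_ne_q2 : p1 n ≠ q2 n := by simp [p1, q2, Fin.ext_iff]
@[simp] lemma q2_ne_p1 : q2 n ≠ p1 n := by simp [p1, q2, Fin.ext_iff]
@[simp] lemma p2_ne_q1 : p2 n ≠ q1 n := by simp [p2, q1, Fin.ext_iff]
@[simp] lemma q1_ne_p2 : q1 n ≠ p2 n := by simp [p2, q1, Fin.ext_iff]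
@[simp] lemma p2_ne_q2 : p2 n ≠ q2 n := by simp [p2, q2, Fin.ext_iff]
@[simp] lemma q2_ne_p2 : q2 n ≠ p2 n := by simp [p2, q2, Fin.ext_iff]
@[simp] lemma q1_ne_q2 : q1 n ≠ q2 n := by simp [q1, q2, Fin.ext_iff]
@[simp] lemma q2_ne_q1 : q2 n ≠ q1 n := by simp [q1, q2, Fin.ext_iff]

lemma index_cases (a : Fin (n+4)) :
    a = p1 n ∨ a = p2 n ∨ (∃ i, a = ehat i) ∨ a = q1 n ∨ a = q2 n := by
  rcases a with ⟨v, hv⟩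
  by_cases h0 : v = 0
  · exact Or.inl (by simp [p1, Fin.ext_iff, h0])
  by_cases h1 : v = 1
  · exact Or.inr (Or.inl (by simp [p2, Fin.ext_iff, h1]))
  by_cases h2 : v = n + 2
  · exact Or.inr (Or.inr (Or.inr (Or.inl (by simp [q1, Fin.ext_iff, h2]))))
  by_cases h3 : v = n + 3
  · exact Or.inr (Or.inr (Or.inr (Or.inr (by simp [q2, Fin.ext_iff, h3]))))
  · exact Or.inr (Or.inr (Or.inl ⟨⟨v - 2, by omega⟩, by simp [ehat, Fin.ext_iff]; omega⟩))

lemma sum_split (F : Fin (n+4) → ℝ) :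
    ∑ a, F a = F (p1 n) + F (p2 n) + (∑ i : Fin n, F (ehat i)) + F (q1 n) + F (q2 n) := by
  rw [Fin.sum_univ_succ, Fin.sum_univ_succ, Fin.sum_univ_castSucc, Fin.sum_univ_castSucc]
  have e1 : ∀ i : Fin n, F i.castSucc.castSucc.succ.succ = F (ehat i) := fun i => rfl
  have e2 : F (Fin.last n).castSucc.succ.succ = F (q1 n) := rfl
  have e3 : F (Fin.last (n+1)).succ.succ = F (q2 n) := rfl
  have e4 : F 0 = F (p1 n) := rfl
  have e5 : F ((0 : Fin (n+3)).succ) = F (p2 n) := rfl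
  rw [Finset.sum_congr rfl (fun i _ => e1 i), e2, e3, e4, e5]
  ring

end Aux
section Rep
variable {n N : ℕ}
variable {E : Type} [NormedAddCommGroup E] [NormedSpace ℝ E]

/-- `g` factors smoothly through the continuous linear map `T`. -/
def Rep (T : Pt n →L[ℝ] E) (g : Pt n → ℝ) : Prop :=
  ∃ ψ : E → ℝ, ContDiff ℝ (⊤ : ℕ∞) ψ ∧ ∀ x, g x = ψ (T x)

lemma Rep.congr {T : Pt n →L[ℝ] E} {g h : Pt n → ℝ} (hg : Rep T g)
    (e : ∀ x, h x = g x) : Rep T h := by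
  obtain ⟨ψ, h1, h2⟩ := hg
  exact ⟨ψ, h1, fun x => (e x).trans (h2 x)⟩

lemma Rep.const (T : Pt n →L[ℝ] E) (c : ℝ) : Rep T (fun _ => c) :=
  ⟨fun _ => c, contDiff_const, fun _ => rfl⟩

lemma Rep.add {T : Pt n →L[ℝ] E} {g h : Pt n → ℝ} (hg : Rep T g) (hh : Rep T h) :
    Rep T (fun x => g x + h x) := by
  obtain ⟨ψ, h1, h2⟩ := hg; obtain ⟨φ, h3, h4⟩ := hh
  exact ⟨fun e => ψ e + φ e, h1.add h3, fun x => by simp [h2 x, h4 x]⟩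

lemma Rep.neg {T : Pt n →L[ℝ] E} {g : Pt n → ℝ} (hg : Rep T g) :
    Rep T (fun x => -(g x)) := by
  obtain ⟨ψ, h1, h2⟩ := hg
  exact ⟨fun e => -(ψ e), h1.neg, fun x => by simp [h2 x]⟩

lemma Rep.sub {T : Pt n →L[ℝ] E} {g h : Pt n → ℝ} (hg : Rep T g) (hh : Rep T h) :
    Rep T (fun x => g x - h x) := by
  obtain ⟨ψ, h1, h2⟩ := hg; obtain ⟨φ, h3, h4⟩ := hh
  exact ⟨fun e => ψ e - φ e, h1.sub h3, fun x => by simp [h2 x, h4 x]⟩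

lemma Rep.mul {T : Pt n →L[ℝ] E} {g h : Pt n → ℝ} (hg : Rep T g) (hh : Rep T h) :
    Rep T (fun x => g x * h x) := by
  obtain ⟨ψ, h1, h2⟩ := hg; obtain ⟨φ, h3, h4⟩ := hh
  exact ⟨fun e => ψ e * φ e, h1.mul h3, fun x => by simp [h2 x, h4 x]⟩

lemma Rep.sum {T : Pt n →L[ℝ] E} {ι : Type} (s : Finset ι) (g : ι → Pt n → ℝ)
    (hg : ∀ i ∈ s, Rep T (g i)) : Rep T (fun x => ∑ i ∈ s, g i x) := by
  classical
  induction s using Finset.induction with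
  | empty => exact (Rep.const T 0).congr (by simp)
  | insert a s' hni ih =>
    exact ((hg a (by simp)).add (ih (fun i hi => hg i (by simp [hi])))).congr
      (fun x => by rw [Finset.sum_insert hni])

lemma Rep.differentiableAt {T : Pt n →L[ℝ] E} {g : Pt n → ℝ} (hg : Rep T g) (x : Pt n) :
    DifferentiableAt ℝ g x := by
  obtain ⟨ψ, h1, h2⟩ := hg
  have : g = fun x => ψ (T x) := funext h2
  rw [this]
  exact ((h1.differentiable (by simp)) (T x)).comp x T.differentiableAt

lemma Rep.hasFDerivAt {T : Pt n →L[ℝ] E} {g : Pt n → ℝ} {ψ : E → ℝ}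
    (h1 : ContDiff ℝ (⊤ : ℕ∞) ψ) (h2 : ∀ x, g x = ψ (T x)) (x : Pt n) :
    HasFDerivAt g ((fderiv ℝ ψ (T x)).comp T) x := by
  have : g = fun x => ψ (T x) := funext h2
  rw [this]
  exact (((h1.differentiable (by simp)) (T x)).hasFDerivAt).comp x T.hasFDerivAt

lemma Rep.pd_eq {T : Pt n →L[ℝ] E} {g : Pt n → ℝ} {ψ : E → ℝ}
    (h1 : ContDiff ℝ (⊤ : ℕ∞) ψ) (h2 : ∀ x, g x = ψ (T x)) (f : Fin (n+4)) (x : Pt n) :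
    pd f g x = fderiv ℝ ψ (T x) (T (Pi.single f 1)) := by
  have := (Rep.hasFDerivAt h1 h2 x).fderiv
  simp [pd, this]

lemma Rep.pd_zero {T : Pt n →L[ℝ] E} {g : Pt n → ℝ} (hg : Rep T g) {f : Fin (n+4)}
    (hf : T (Pi.single f 1) = 0) (x : Pt n) : pd f g x = 0 := by
  obtain ⟨ψ, h1, h2⟩ := hg
  rw [Rep.pd_eq h1 h2 f x, hf]
  simp

lemma Rep.pd {T : Pt n →L[ℝ] E} {g : Pt n → ℝ} (hg : Rep T g) (f : Fin (n+4)) :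
    Rep T (pd f g) := by
  obtain ⟨ψ, h1, h2⟩ := hg
  refine ⟨fun e => fderiv ℝ ψ e (T (Pi.single f 1)), ?_, fun x => Rep.pd_eq h1 h2 f x⟩
  exact (h1.fderiv_right (by simp)).clm_apply contDiff_const

/-! ### The two relevant linear maps -/

/-- projection onto the `(x̂, q1)` coordinates -/
def πm (n : ℕ) : Pt n →L[ℝ] ((Fin n → ℝ) × ℝ) :=
  (ContinuousLinearMap.pi (fun i => ContinuousLinearMap.proj (ehat i))).prod
    (ContinuousLinearMap.proj (q1 n))

/-- projection onto the `q1` coordinate -/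
def ρm (n : ℕ) : Pt n →L[ℝ] ℝ := ContinuousLinearMap.proj (q1 n)

/-- smooth functions of `(x̂, q1)` -/
abbrev Sm (g : Pt n → ℝ) : Prop := Rep (πm n) g
/-- smooth functions of `q1` alone -/
abbrev Sq (g : Pt n → ℝ) : Prop := Rep (ρm n) g

lemma πm_single_p1 : πm n (Pi.single (p1 n) 1) = 0 := by
  ext
  · simp [πm, Pi.single_apply]
  · simp [πm, Pi.single_apply]

lemma πm_single_p2 : πm n (Pi.single (p2 n) 1) = 0 := by
  ext
  · simp [πm, Pi.single_apply]
  · simp [πm, Pi.single_apply]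

lemma πm_single_q2 : πm n (Pi.single (q2 n) 1) = 0 := by
  ext
  · simp [πm, Pi.single_apply]
  · simp [πm, Pi.single_apply]

lemma ρm_single {f : Fin (n+4)} (hf : f ≠ q1 n) : ρm n (Pi.single f 1) = 0 := by
  simp [ρm, Pi.single_apply]
  intro h; exact absurd h.symm hf

lemma Sm.pd_p1 {g : Pt n → ℝ} (hg : Sm g) (x : Pt n) : pd (p1 n) g x = 0 :=
  hg.pd_zero πm_single_p1 x
lemma Sm.pd_p2 {g : Pt n → ℝ} (hg : Sm g) (x : Pt n) : pd (p2 n) g x = 0 :=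
  hg.pd_zero πm_single_p2 x
lemma Sm.pd_q2 {g : Pt n → ℝ} (hg : Sm g) (x : Pt n) : pd (q2 n) g x = 0 :=
  hg.pd_zero πm_single_q2 x
lemma Sq.pd_ne_q1 {g : Pt n → ℝ} (hg : Sq g) {f : Fin (n+4)} (hf : f ≠ q1 n) (x : Pt n) :
    pd f g x = 0 :=
  hg.pd_zero (ρm_single hf) x

end Rep
section PdBasics
variable {n N : ℕ} {A : Fin N → Matrix (Fin n) (Fin n) ℝ}

lemma pd_fun_congr {g h : Pt n → ℝ} (f : Fin (n+4)) (e : ∀ y, g y = h y) :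
    pd f g = pd f h := by rw [funext e]

lemma pd_const (f : Fin (n+4)) (c : ℝ) (x : Pt n) : pd f (fun _ => c) x = 0 := by
  simp [pd]

lemma pd_of_eq_const {g : Pt n → ℝ} {c : ℝ} (e : ∀ y, g y = c) (f : Fin (n+4)) (x : Pt n) :
    pd f g x = 0 := by
  rw [pd_fun_congr f e, pd_const]

lemma pd_of_eq_zero {g : Pt n → ℝ} (e : ∀ y, g y = 0) (f : Fin (n+4)) (x : Pt n) :
    pd f g x = 0 := pd_of_eq_const e f x

lemma pd_sum {ι : Type} (s : Finset ι) (g : ι → Pt n → ℝ) {x : Pt n}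
    (hg : ∀ i ∈ s, DifferentiableAt ℝ (g i) x) (f : Fin (n+4)) :
    pd f (fun y => ∑ i ∈ s, g i y) x = ∑ i ∈ s, pd f (g i) x := by
  simp [pd, fderiv_fun_sum hg]

/-- has-derivative fact for the basic monomials appearing in `u`. -/
lemma mono_hasFDerivAt (C : ℝ) (a b : Fin (n+4)) (k : ℕ) (x : Pt n) :
    HasFDerivAt (fun y : Pt n => C * y a * y b ^ k)
      ((C * x a) • ((k : ℝ) * x b ^ (k-1)) • (ContinuousLinearMap.proj b : Pt n →L[ℝ] ℝ)
        + (x b ^ k) • C • (ContinuousLinearMap.proj a : Pt n →L[ℝ] ℝ)) x := by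
  have h1 : HasFDerivAt (fun y : Pt n => C * y a)
      (C • (ContinuousLinearMap.proj a : Pt n →L[ℝ] ℝ)) x :=
    (ContinuousLinearMap.proj a : Pt n →L[ℝ] ℝ).hasFDerivAt.const_mul C
  have h2 : HasFDerivAt (fun y : Pt n => y b ^ k)
      (((k : ℝ) * x b ^ (k-1)) • (ContinuousLinearMap.proj b : Pt n →L[ℝ] ℝ)) x :=
    (hasDerivAt_pow k (x b)).comp_hasFDerivAt x
      (ContinuousLinearMap.proj b : Pt n →L[ℝ] ℝ).hasFDerivAt
  exact h1.mul h2

lemma mono_diff (C : ℝ) (a b : Fin (n+4)) (k : ℕ) (x : Pt n) :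
    DifferentiableAt ℝ (fun y : Pt n => C * y a * y b ^ k) x :=
  (mono_hasFDerivAt C a b k x).differentiableAt

lemma pd_mono (C : ℝ) (a b : Fin (n+4)) (k : ℕ) (f : Fin (n+4)) (x : Pt n) :
    pd f (fun y : Pt n => C * y a * y b ^ k) x
      = (C * x a) * (((k : ℝ) * x b ^ (k-1)) * ((Pi.single f 1 : Pt n) b))
        + (x b ^ k) * (C * ((Pi.single f 1 : Pt n) a)) := by
  have := (mono_hasFDerivAt C a b k x).fderiv
  simp [pd, this]

/-- `B_{ij} = ∂u^i/∂x^ĵ`. -/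
def Bfun (A : Fin N → Matrix (Fin n) (Fin n) ℝ) (i j : Fin n) (x : Pt n) : ℝ :=
  ∑ α : Fin N, A α i j * x (q1 n) ^ (α.1 + 1)

lemma u_eq (i : Fin n) :
    u A i = fun y => ∑ j : Fin n, ∑ α : Fin N, A α i j * y (ehat j) * y (q1 n) ^ (α.1+1) :=
  rfl

lemma u_diff (i : Fin n) (x : Pt n) : DifferentiableAt ℝ (u A i) x := by
  rw [u_eq]
  exact DifferentiableAt.fun_sum fun j _ => DifferentiableAt.fun_sum fun α _ =>
    mono_diff (A α i j) (ehat j) (q1 n) (α.1+1) x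

lemma pd_u (i k : Fin n) (x : Pt n) : pd (ehat k) (u A i) x = Bfun A i k x := by
  rw [u_eq]
  rw [pd_sum _ _ (fun j _ => DifferentiableAt.fun_sum fun α _ =>
    mono_diff (A α i j) (ehat j) (q1 n) (α.1+1) x)]
  have : ∀ j : Fin n, pd (ehat k)
      (fun y => ∑ α : Fin N, A α i j * y (ehat j) * y (q1 n) ^ (α.1+1)) x
      = if j = k then Bfun A i j x else 0 := by
    intro j
    rw [pd_sum _ _ (fun α _ => mono_diff (A α i j) (ehat j) (q1 n) (α.1+1) x)]
    by_cases hj : j = k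
    · subst hj
      simp only [if_pos rfl, Bfun]
      refine Finset.sum_congr rfl fun α _ => ?_
      rw [pd_mono]
      simp [Pi.single_apply]
      ring
    · simp only [if_neg hj]
      refine Finset.sum_eq_zero fun α _ => ?_
      rw [pd_mono]
      have h1 : (Pi.single (ehat k) 1 : Pt n) (q1 n) = 0 := by
        simp [Pi.single_apply]
      have h2 : (Pi.single (ehat k) 1 : Pt n) (ehat j) = 0 := by
        simp [Pi.single_apply]
        intro h; exact absurd h hj
      rw [h1, h2]; ring
  rw [Finset.sum_congr rfl fun j _ => this j]
  simp

/-! ### membership of the basic functions in `Sm`/`Sq` -/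

lemma Sq_coord_q1 : Sq (fun x : Pt n => x (q1 n)) :=
  ⟨fun t => t, contDiff_id, fun _ => rfl⟩

lemma Sq.pow {g : Pt n → ℝ} (hg : Sq g) (k : ℕ) : Sq (fun x => g x ^ k) := by
  obtain ⟨ψ, h1, h2⟩ := hg
  exact ⟨fun t => ψ t ^ k, h1.pow k, fun x => by show g x ^ k = _; rw [h2 x]⟩

lemma Bfun_Sq (i j : Fin n) : Sq (fun x => Bfun A i j x) := by
  refine Rep.sum _ _ fun α _ => ?_
  exact ((Rep.const _ _).mul (Sq_coord_q1.pow (α.1+1))).congr (fun x => rfl)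

lemma Sm_coord_ehat (i : Fin n) : Sm (fun x : Pt n => x (ehat i)) :=
  ⟨fun z => z.1 i, (contDiff_apply ℝ ℝ i).comp contDiff_fst, fun _ => rfl⟩

lemma Sm_coord_q1 : Sm (fun x : Pt n => x (q1 n)) :=
  ⟨fun z => z.2, contDiff_snd, fun _ => rfl⟩

lemma Sm.pow {g : Pt n → ℝ} (hg : Sm g) (k : ℕ) : Sm (fun x => g x ^ k) := by
  obtain ⟨ψ, h1, h2⟩ := hg
  exact ⟨fun t => ψ t ^ k, h1.pow k, fun x => by show g x ^ k = _; rw [h2 x]⟩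

lemma u_Sm (i : Fin n) : Sm (u A i) := by
  refine Rep.congr (Rep.sum Finset.univ
    (fun j x => ∑ α : Fin N, A α i j * x (ehat j) * x (q1 n) ^ (α.1+1)) ?_) (fun x => rfl)
  intro j _
  refine Rep.sum _ _ fun α _ => ?_
  exact ((Rep.const _ _).mul (Sm_coord_ehat j)).mul (Sm_coord_q1.pow (α.1+1))

lemma Fq_Sm : Sm (Fq n) := by
  refine Rep.congr (Rep.sum Finset.univ (fun i x => x (ehat i) ^ 2) ?_) (fun x => rfl)
  exact fun i _ => (Sm_coord_ehat i).pow 2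

lemma Bfun_Sm (i j : Fin n) : Sm (fun x => Bfun A i j x) := by
  refine Rep.sum _ _ fun α _ => ?_
  exact ((Rep.const _ _).mul (Sm_coord_q1.pow (α.1+1))).congr (fun x => rfl)

/-- every entry of the metric is a smooth function of `(x̂, q1)` -/
lemma Gmet_Sm (a b : Fin (n+4)) : Sm (fun y => Gmet A y a b) := by
  unfold Gmet
  refine ((((Rep.const _ _).add (Rep.const _ _)).add (Rep.const _ _)).add ?_).add ?_
  · refine Rep.sum _ _ fun i _ => ?_
    by_cases h : (a = ehat i ∧ b = q2 n) ∨ (a = q2 n ∧ b = ehat i)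
    · exact (u_Sm i).congr (fun x => by rw [if_pos h])
    · exact (Rep.const _ 0).congr (fun x => by rw [if_neg h])
  · by_cases h : (a = q1 n ∧ b = q1 n) ∨ (a = q2 n ∧ b = q2 n)
    · exact Fq_Sm.congr (fun x => by rw [if_pos h])
    · exact (Rep.const _ 0).congr (fun x => by rw [if_neg h])

end PdBasics
section GinvSec
variable {n N : ℕ} {A : Fin N → Matrix (Fin n) (Fin n) ℝ}

/-- explicit inverse of the metric -/
def Ginv (A : Fin N → Matrix (Fin n) (Fin n) ℝ) (x : Pt n) :
    Matrix (Fin (n + 4)) (Fin (n + 4)) ℝ := fun a b =>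
  (if (a = p1 n ∧ b = q1 n) ∨ (a = q1 n ∧ b = p1 n) then (1 : ℝ) else 0)
  + (if (a = p2 n ∧ b = q2 n) ∨ (a = q2 n ∧ b = p2 n) then (1 : ℝ) else 0)
  + (∑ i : Fin n, if a = ehat i ∧ b = ehat i then (1 : ℝ) else 0)
  - (∑ i : Fin n, if (a = ehat i ∧ b = p2 n) ∨ (a = p2 n ∧ b = ehat i) then u A i x else 0)
  + (if a = p1 n ∧ b = p1 n then -(Fq n x) else 0)
  + (if a = p2 n ∧ b = p2 n then (∑ i : Fin n, (u A i x)^2) - Fq n x else 0)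

/-! ### entries of `Gmet` -/

lemma Gm_p1_p1 (x : Pt n) : Gmet A x (p1 n) (p1 n) = 0 := by simp [Gmet]
lemma Gm_p1_p2 (x : Pt n) : Gmet A x (p1 n) (p2 n) = 0 := by simp [Gmet]
lemma Gm_p2_p1 (x : Pt n) : Gmet A x (p2 n) (p1 n) = 0 := by simp [Gmet]
lemma Gm_p1_e (i : Fin n) (x : Pt n) : Gmet A x (p1 n) (ehat i) = 0 := by simp [Gmet]
lemma Gm_e_p1 (i : Fin n) (x : Pt n) : Gmet A x (ehat i) (p1 n) = 0 := by simp [Gmet]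
lemma Gm_p1_q1 (x : Pt n) : Gmet A x (p1 n) (q1 n) = 1 := by simp [Gmet]
lemma Gm_q1_p1 (x : Pt n) : Gmet A x (q1 n) (p1 n) = 1 := by simp [Gmet]
lemma Gm_p1_q2 (x : Pt n) : Gmet A x (p1 n) (q2 n) = 0 := by simp [Gmet]
lemma Gm_q2_p1 (x : Pt n) : Gmet A x (q2 n) (p1 n) = 0 := by simp [Gmet]
lemma Gm_p2_p2 (x : Pt n) : Gmet A x (p2 n) (p2 n) = 0 := by simp [Gmet]
lemma Gm_p2_e (i : Fin n) (x : Pt n) : Gmet A x (p2 n) (ehat i) = 0 := by simp [Gmet]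
lemma Gm_e_p2 (i : Fin n) (x : Pt n) : Gmet A x (ehat i) (p2 n) = 0 := by simp [Gmet]
lemma Gm_p2_q1 (x : Pt n) : Gmet A x (p2 n) (q1 n) = 0 := by simp [Gmet]
lemma Gm_q1_p2 (x : Pt n) : Gmet A x (q1 n) (p2 n) = 0 := by simp [Gmet]
lemma Gm_p2_q2 (x : Pt n) : Gmet A x (p2 n) (q2 n) = 1 := by simp [Gmet]
lemma Gm_q2_p2 (x : Pt n) : Gmet A x (q2 n) (p2 n) = 1 := by simp [Gmet]
lemma Gm_e_e (i k : Fin n) (x : Pt n) :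
    Gmet A x (ehat i) (ehat k) = if i = k then 1 else 0 := by
  by_cases h : i = k
  · subst h
    simp [Gmet]
  · simp [Gmet, h]
    exact fun e => h e.symm
lemma Gm_e_q1 (i : Fin n) (x : Pt n) : Gmet A x (ehat i) (q1 n) = 0 := by simp [Gmet]
lemma Gm_q1_e (i : Fin n) (x : Pt n) : Gmet A x (q1 n) (ehat i) = 0 := by simp [Gmet]
lemma Gm_e_q2 (i : Fin n) (x : Pt n) : Gmet A x (ehat i) (q2 n) = u A i x := by
  simp [Gmet]
lemma Gm_q2_e (i : Fin n) (x : Pt n) : Gmet A x (q2 n) (ehat i) = u A i x := by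
  simp [Gmet]
lemma Gm_q1_q1 (x : Pt n) : Gmet A x (q1 n) (q1 n) = Fq n x := by simp [Gmet]
lemma Gm_q1_q2 (x : Pt n) : Gmet A x (q1 n) (q2 n) = 0 := by simp [Gmet]
lemma Gm_q2_q1 (x : Pt n) : Gmet A x (q2 n) (q1 n) = 0 := by simp [Gmet]
lemma Gm_q2_q2 (x : Pt n) : Gmet A x (q2 n) (q2 n) = Fq n x := by simp [Gmet]

/-! ### entries of `Ginv` -/

lemma Gi_p1_p1 (x : Pt n) : Ginv A x (p1 n) (p1 n) = -(Fq n x) := by simp [Ginv]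
lemma Gi_p1_p2 (x : Pt n) : Ginv A x (p1 n) (p2 n) = 0 := by simp [Ginv]
lemma Gi_p2_p1 (x : Pt n) : Ginv A x (p2 n) (p1 n) = 0 := by simp [Ginv]
lemma Gi_p1_e (i : Fin n) (x : Pt n) : Ginv A x (p1 n) (ehat i) = 0 := by simp [Ginv]
lemma Gi_e_p1 (i : Fin n) (x : Pt n) : Ginv A x (ehat i) (p1 n) = 0 := by simp [Ginv]
lemma Gi_p1_q1 (x : Pt n) : Ginv A x (p1 n) (q1 n) = 1 := by simp [Ginv]
lemma Gi_q1_p1 (x : Pt n) : Ginv A x (q1 n) (p1 n) = 1 := by simp [Ginv]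
lemma Gi_p1_q2 (x : Pt n) : Ginv A x (p1 n) (q2 n) = 0 := by simp [Ginv]
lemma Gi_q2_p1 (x : Pt n) : Ginv A x (q2 n) (p1 n) = 0 := by simp [Ginv]
lemma Gi_p2_p2 (x : Pt n) :
    Ginv A x (p2 n) (p2 n) = (∑ i : Fin n, (u A i x)^2) - Fq n x := by simp [Ginv]
lemma Gi_p2_e (i : Fin n) (x : Pt n) : Ginv A x (p2 n) (ehat i) = -(u A i x) := by
  simp [Ginv]
lemma Gi_e_p2 (i : Fin n) (x : Pt n) : Ginv A x (ehat i) (p2 n) = -(u A i x) := by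
  simp [Ginv]
lemma Gi_p2_q1 (x : Pt n) : Ginv A x (p2 n) (q1 n) = 0 := by simp [Ginv]
lemma Gi_q1_p2 (x : Pt n) : Ginv A x (q1 n) (p2 n) = 0 := by simp [Ginv]
lemma Gi_p2_q2 (x : Pt n) : Ginv A x (p2 n) (q2 n) = 1 := by simp [Ginv]
lemma Gi_q2_p2 (x : Pt n) : Ginv A x (q2 n) (p2 n) = 1 := by simp [Ginv]
lemma Gi_e_e (i k : Fin n) (x : Pt n) :
    Ginv A x (ehat i) (ehat k) = if i = k then 1 else 0 := by
  by_cases h : i = k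
  · subst h
    simp [Ginv]
  · simp [Ginv, h]
    exact fun e => h e.symm
lemma Gi_e_q1 (i : Fin n) (x : Pt n) : Ginv A x (ehat i) (q1 n) = 0 := by simp [Ginv]
lemma Gi_q1_e (i : Fin n) (x : Pt n) : Ginv A x (q1 n) (ehat i) = 0 := by simp [Ginv]
lemma Gi_e_q2 (i : Fin n) (x : Pt n) : Ginv A x (ehat i) (q2 n) = 0 := by simp [Ginv]
lemma Gi_q2_e (i : Fin n) (x : Pt n) : Ginv A x (q2 n) (ehat i) = 0 := by simp [Ginv]
lemma Gi_q1_q1 (x : Pt n) : Ginv A x (q1 n) (q1 n) = 0 := by simp [Ginv]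
lemma Gi_q1_q2 (x : Pt n) : Ginv A x (q1 n) (q2 n) = 0 := by simp [Ginv]
lemma Gi_q2_q1 (x : Pt n) : Ginv A x (q2 n) (q1 n) = 0 := by simp [Ginv]
lemma Gi_q2_q2 (x : Pt n) : Ginv A x (q2 n) (q2 n) = 0 := by simp [Ginv]

end GinvSec
section InvProof
variable {n N : ℕ} {A : Fin N → Matrix (Fin n) (Fin n) ℝ}

lemma Gmet_mul_Ginv (x : Pt n) : Gmet A x * Ginv A x = 1 := by
  ext a b
  rw [Matrix.mul_apply, sum_split (fun c => Gmet A x a c * Ginv A x c b)]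
  rcases index_cases a with rfl | rfl | ⟨i, rfl⟩ | rfl | rfl <;>
    rcases index_cases b with rfl | rfl | ⟨j, rfl⟩ | rfl | rfl <;>
    simp [Gm_p1_p1, Gm_p1_p2, Gm_p2_p1, Gm_p1_e, Gm_e_p1, Gm_p1_q1, Gm_q1_p1, Gm_p1_q2,
      Gm_q2_p1, Gm_p2_p2, Gm_p2_e, Gm_e_p2, Gm_p2_q1, Gm_q1_p2, Gm_p2_q2, Gm_q2_p2,
      Gm_e_e, Gm_e_q1, Gm_q1_e, Gm_e_q2, Gm_q2_e, Gm_q1_q1, Gm_q1_q2, Gm_q2_q1, Gm_q2_q2,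
      Gi_p1_p1, Gi_p1_p2, Gi_p2_p1, Gi_p1_e, Gi_e_p1, Gi_p1_q1, Gi_q1_p1, Gi_p1_q2,
      Gi_q2_p1, Gi_p2_p2, Gi_p2_e, Gi_e_p2, Gi_p2_q1, Gi_q1_p2, Gi_p2_q2, Gi_q2_p2,
      Gi_e_e, Gi_e_q1, Gi_q1_e, Gi_e_q2, Gi_q2_e, Gi_q1_q1, Gi_q1_q2, Gi_q2_q1, Gi_q2_q2,
      Matrix.one_apply] <;>
    ring_nf <;>
    simp [Finset.mul_sum, mul_comm, mul_pow, pow_two]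

lemma Gmet_inv_eq (x : Pt n) : (Gmet A x)⁻¹ = Ginv A x :=
  Matrix.inv_eq_right_inv (Gmet_mul_Ginv x)

lemma Γchr_eq (a b c : Fin (n+4)) (x : Pt n) :
    Γchr A a b c x = (1 / 2) * ∑ d : Fin (n + 4), Ginv A x a d *
      (pd b (fun y => Gmet A y d c) x + pd c (fun y => Gmet A y b d) x
        - pd d (fun y => Gmet A y b c) x) := by
  unfold Γchr
  rw [Gmet_inv_eq]

end InvProof
section GammaSec
variable {n N : ℕ} {A : Fin N → Matrix (Fin n) (Fin n) ℝ}

lemma Gmet_row_p1 (d : Fin (n+4)) (y : Pt n) :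
    Gmet A y (p1 n) d = if d = q1 n then 1 else 0 := by
  rcases index_cases d with rfl | rfl | ⟨i, rfl⟩ | rfl | rfl <;>
    simp [Gm_p1_p1, Gm_p1_p2, Gm_p1_e, Gm_p1_q1, Gm_p1_q2]

lemma Gmet_col_p1 (d : Fin (n+4)) (y : Pt n) :
    Gmet A y d (p1 n) = if d = q1 n then 1 else 0 := by
  rcases index_cases d with rfl | rfl | ⟨i, rfl⟩ | rfl | rfl <;>
    simp [Gm_p1_p1, Gm_p2_p1, Gm_e_p1, Gm_q1_p1, Gm_q2_p1]

lemma Gmet_row_p2 (d : Fin (n+4)) (y : Pt n) :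
    Gmet A y (p2 n) d = if d = q2 n then 1 else 0 := by
  rcases index_cases d with rfl | rfl | ⟨i, rfl⟩ | rfl | rfl <;>
    simp [Gm_p2_p1, Gm_p2_p2, Gm_p2_e, Gm_p2_q1, Gm_p2_q2]

lemma Gmet_col_p2 (d : Fin (n+4)) (y : Pt n) :
    Gmet A y d (p2 n) = if d = q2 n then 1 else 0 := by
  rcases index_cases d with rfl | rfl | ⟨i, rfl⟩ | rfl | rfl <;>
    simp [Gm_p1_p2, Gm_p2_p2, Gm_e_p2, Gm_q1_p2, Gm_q2_p2]

/-- the three partial derivatives appearing in a Christoffel symbol, with a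
`p1` in the symmetric slots, all vanish -/
lemma Γterm_p1 (d c : Fin (n+4)) (x : Pt n) :
    pd (p1 n) (fun y => Gmet A y d c) x + pd c (fun y => Gmet A y (p1 n) d) x
      - pd d (fun y => Gmet A y (p1 n) c) x = 0 := by
  rw [(Gmet_Sm d c).pd_p1 x, pd_of_eq_const (fun y => Gmet_row_p1 d y) c x,
    pd_of_eq_const (fun y => Gmet_row_p1 c y) d x]
  ring

lemma Γterm_p1' (d b : Fin (n+4)) (x : Pt n) :
    pd b (fun y => Gmet A y d (p1 n)) x + pd (p1 n) (fun y => Gmet A y b d) x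
      - pd d (fun y => Gmet A y b (p1 n)) x = 0 := by
  rw [(Gmet_Sm b d).pd_p1 x, pd_of_eq_const (fun y => Gmet_col_p1 d y) b x,
    pd_of_eq_const (fun y => Gmet_col_p1 b y) d x]
  ring

lemma Γterm_p2 (d c : Fin (n+4)) (x : Pt n) :
    pd (p2 n) (fun y => Gmet A y d c) x + pd c (fun y => Gmet A y (p2 n) d) x
      - pd d (fun y => Gmet A y (p2 n) c) x = 0 := by
  rw [(Gmet_Sm d c).pd_p2 x, pd_of_eq_const (fun y => Gmet_row_p2 d y) c x,
    pd_of_eq_const (fun y => Gmet_row_p2 c y) d x]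
  ring

lemma Γterm_p2' (d b : Fin (n+4)) (x : Pt n) :
    pd b (fun y => Gmet A y d (p2 n)) x + pd (p2 n) (fun y => Gmet A y b d) x
      - pd d (fun y => Gmet A y b (p2 n)) x = 0 := by
  rw [(Gmet_Sm b d).pd_p2 x, pd_of_eq_const (fun y => Gmet_col_p2 d y) b x,
    pd_of_eq_const (fun y => Gmet_col_p2 b y) d x]
  ring

/-- Christoffel symbols with a lower `p1`/`p2` index vanish. -/
lemma Γ_b_p1 (a c : Fin (n+4)) (x : Pt n) : Γchr A a (p1 n) c x = 0 := by
  rw [Γchr_eq]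
  rw [Finset.sum_eq_zero fun d _ => by rw [Γterm_p1 d c x, mul_zero]]
  ring

lemma Γ_b_p2 (a c : Fin (n+4)) (x : Pt n) : Γchr A a (p2 n) c x = 0 := by
  rw [Γchr_eq]
  rw [Finset.sum_eq_zero fun d _ => by rw [Γterm_p2 d c x, mul_zero]]
  ring

lemma Γ_c_p1 (a b : Fin (n+4)) (x : Pt n) : Γchr A a b (p1 n) x = 0 := by
  rw [Γchr_eq]
  rw [Finset.sum_eq_zero fun d _ => by rw [Γterm_p1' d b x, mul_zero]]
  ring

lemma Γ_c_p2 (a b : Fin (n+4)) (x : Pt n) : Γchr A a b (p2 n) x = 0 := by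
  rw [Γchr_eq]
  rw [Finset.sum_eq_zero fun d _ => by rw [Γterm_p2' d b x, mul_zero]]
  ring

/-- Christoffel symbols with upper index `q1` or `q2` vanish. -/
lemma Γ_up_q1 (b c : Fin (n+4)) (x : Pt n) : Γchr A (q1 n) b c x = 0 := by
  rw [Γchr_eq]
  rw [Finset.sum_eq_zero]
  · ring
  intro d _
  by_cases hd : d = p1 n
  · subst hd
    have : pd b (fun y => Gmet A y (p1 n) c) x + pd c (fun y => Gmet A y b (p1 n)) x
        - pd (p1 n) (fun y => Gmet A y b c) x = 0 := by
      rw [(Gmet_Sm b c).pd_p1 x, pd_of_eq_const (fun y => Gmet_row_p1 c y) b x,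
        pd_of_eq_const (fun y => Gmet_col_p1 b y) c x]
      ring
    rw [this, mul_zero]
  · have : Ginv A x (q1 n) d = 0 := by
      rcases index_cases d with rfl | rfl | ⟨i, rfl⟩ | rfl | rfl
      · exact absurd rfl hd
      · exact Gi_q1_p2 x
      · exact Gi_q1_e i x
      · exact Gi_q1_q1 x
      · exact Gi_q1_q2 x
    rw [this, zero_mul]

lemma Γ_up_q2 (b c : Fin (n+4)) (x : Pt n) : Γchr A (q2 n) b c x = 0 := by
  rw [Γchr_eq]
  rw [Finset.sum_eq_zero]
  · ring
  intro d _
  by_cases hd : d = p2 n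
  · subst hd
    have : pd b (fun y => Gmet A y (p2 n) c) x + pd c (fun y => Gmet A y b (p2 n)) x
        - pd (p2 n) (fun y => Gmet A y b c) x = 0 := by
      rw [(Gmet_Sm b c).pd_p2 x, pd_of_eq_const (fun y => Gmet_row_p2 c y) b x,
        pd_of_eq_const (fun y => Gmet_col_p2 b y) c x]
      ring
    rw [this, mul_zero]
  · have : Ginv A x (q2 n) d = 0 := by
      rcases index_cases d with rfl | rfl | ⟨i, rfl⟩ | rfl | rfl
      · exact Gi_q2_p1 x
      · exact absurd rfl hd
      · exact Gi_q2_e i x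
      · exact Gi_q2_q1 x
      · exact Gi_q2_q2 x
    rw [this, zero_mul]

lemma Bfun_skew (hA : ∀ α, (A α)ᵀ = -A α) (i k : Fin n) (x : Pt n) :
    Bfun A k i x = -(Bfun A i k x) := by
  unfold Bfun
  rw [← Finset.sum_neg_distrib]
  refine Finset.sum_congr rfl fun α _ => ?_
  have : A α k i = -(A α i k) := by
    have := congrFun (congrFun (hA α) i) k
    simpa [Matrix.transpose_apply] using this
  rw [this]
  ring

/-- The key closed form: `Γ^î_{b ĵ}` is `B_{ij}` if `b = q2` and `0` otherwise. -/
lemma Γ_e3rd (hA : ∀ α, (A α)ᵀ = -A α) (i : Fin n) (b : Fin (n+4)) (k : Fin n) (x : Pt n) :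
    Γchr A (ehat i) b (ehat k) x = if b = q2 n then Bfun A i k x else 0 := by
  rw [Γchr_eq]
  rw [Finset.sum_eq_single (ehat i)]
  · have h1 : pd b (fun y => Gmet A y (ehat i) (ehat k)) x = 0 :=
      pd_of_eq_const (fun y => Gm_e_e i k y) b x
    rw [Gi_e_e, if_pos rfl, h1]
    rcases index_cases b with rfl | rfl | ⟨m, rfl⟩ | rfl | rfl
    · rw [pd_of_eq_const (fun y => Gmet_row_p1 (ehat i) y) (ehat k) x,
        pd_of_eq_const (fun y => Gmet_row_p1 (ehat k) y) (ehat i) x, if_neg p1_ne_q2]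
      ring
    · rw [pd_of_eq_const (fun y => Gmet_row_p2 (ehat i) y) (ehat k) x,
        pd_of_eq_const (fun y => Gmet_row_p2 (ehat k) y) (ehat i) x, if_neg p2_ne_q2]
      ring
    · rw [pd_of_eq_const (fun y => Gm_e_e m i y) (ehat k) x,
        pd_of_eq_const (fun y => Gm_e_e m k y) (ehat i) x, if_neg (ehat_ne_q2 m)]
      ring
    · rw [pd_of_eq_const (fun y => Gm_q1_e i y) (ehat k) x,
        pd_of_eq_const (fun y => Gm_q1_e k y) (ehat i) x, if_neg q1_ne_q2]
      ring
    · rw [pd_fun_congr (ehat k) (fun y => Gm_q2_e i y),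
        pd_fun_congr (ehat i) (fun y => Gm_q2_e k y), pd_u i k x, pd_u k i x,
        Bfun_skew hA k i x, if_pos rfl]
      ring
  · intro d _ hd
    by_cases hp2 : d = p2 n
    · subst hp2
      have : pd b (fun y => Gmet A y (p2 n) (ehat k)) x
          + pd (ehat k) (fun y => Gmet A y b (p2 n)) x
          - pd (p2 n) (fun y => Gmet A y b (ehat k)) x = 0 := by
        rw [(Gmet_Sm b (ehat k)).pd_p2 x, pd_of_eq_const (fun y => Gmet_row_p2 (ehat k) y) b x,
          pd_of_eq_const (fun y => Gmet_col_p2 b y) (ehat k) x]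
        ring
      rw [this, mul_zero]
    · have : Ginv A x (ehat i) d = 0 := by
        rcases index_cases d with rfl | rfl | ⟨m, rfl⟩ | rfl | rfl
        · exact Gi_e_p1 i x
        · exact absurd rfl hp2
        · rw [Gi_e_e, if_neg]
          intro h; subst h; exact hd rfl
        · exact Gi_e_q1 i x
        · exact Gi_e_q2 i x
      rw [this, zero_mul]
  · intro h
    exact absurd (Finset.mem_univ _) h

/-- membership of `Ginv` entries in `Sm` -/
lemma Ginv_Sm (a b : Fin (n+4)) : Sm (fun y => Ginv A y a b) := by
  unfold Ginv
  refine (((((Rep.const _ _).add (Rep.const _ _)).add (Rep.const _ _)).sub ?_).add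
    (?_ : Sm _)).add (?_ : Sm _)
  · refine Rep.sum _ _ fun i _ => ?_
    by_cases h : (a = ehat i ∧ b = p2 n) ∨ (a = p2 n ∧ b = ehat i)
    · exact (u_Sm i).congr (fun x => by rw [if_pos h])
    · exact (Rep.const _ 0).congr (fun x => by rw [if_neg h])
  · by_cases h : a = p1 n ∧ b = p1 n
    · exact Fq_Sm.neg.congr (fun x => by rw [if_pos h])
    · exact (Rep.const _ 0).congr (fun x => by rw [if_neg h])
  · by_cases h : a = p2 n ∧ b = p2 n
    · refine (Rep.sub (Rep.sum Finset.univ (fun i x => (u A i x)^2)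
        (fun i _ => (u_Sm i).pow 2)) Fq_Sm).congr (fun x => by rw [if_pos h])
    · exact (Rep.const _ 0).congr (fun x => by rw [if_neg h])

/-- Christoffel symbols are smooth functions of `(x̂, q1)`. -/
lemma Γchr_Sm (a b c : Fin (n+4)) : Sm (Γchr A a b c) := by
  have : ∀ x, Γchr A a b c x = (1/2) * ∑ d : Fin (n+4), Ginv A x a d *
      (pd b (fun y => Gmet A y d c) x + pd c (fun y => Gmet A y b d) x
        - pd d (fun y => Gmet A y b c) x) := fun x => Γchr_eq a b c x
  refine Rep.congr (((Rep.const _ (1/2 : ℝ)).mul (Rep.sum Finset.univ _ fun d _ => ?_))) this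
  exact (Ginv_Sm a d).mul ((((Gmet_Sm d c).pd b).add ((Gmet_Sm b d).pd c)).sub
    ((Gmet_Sm b c).pd d))

end GammaSec
section ListHelp
variable {α : Type}

lemma mem_set_self {fs : List α} {s : ℕ} (h : s < fs.length) (l : α) : l ∈ fs.set s l := by
  rw [List.mem_iff_getElem]
  exact ⟨s, by rw [List.length_set]; exact h, List.getElem_set_self (by rw [List.length_set]; exact h)⟩

lemma mem_set_of_ne {fs : List α} {g : α} (hg : g ∈ fs) {s : ℕ} (hs : s < fs.length)
    (hne : fs[s] ≠ g) (l : α) : g ∈ fs.set s l := by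
  rw [List.mem_iff_getElem] at hg ⊢
  obtain ⟨t, ht, e⟩ := hg
  have hts : s ≠ t := by
    intro h; subst h; exact hne e
  exact ⟨t, by rw [List.length_set]; exact ht, by rw [List.getElem_set_ne hts]; exact e⟩

end ListHelp

section CurvSec
variable {n N : ℕ} {A : Fin N → Matrix (Fin n) (Fin n) ℝ}

/-- `ehat`-type indices -/
def isE (a : Fin (n+4)) : Prop := ∃ i, a = ehat i

lemma Rcurv_Sm (a b c d : Fin (n+4)) : Sm (Rcurv A a b c d) := by
  refine Rep.congr (T := πm n)
    (g := fun x => pd c (Γchr A a d b) x - pd d (Γchr A a c b) x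
      + ∑ e : Fin (n + 4), (Γchr A a c e x * Γchr A e d b x - Γchr A a d e x * Γchr A e c b x))
    ?_ (fun x => rfl)
  refine (((Γchr_Sm a d b).pd c).sub ((Γchr_Sm a c b).pd d)).add
    (Rep.sum _ _ fun e _ => ((Γchr_Sm a c e).mul (Γchr_Sm e d b)).sub
      ((Γchr_Sm a d e).mul (Γchr_Sm e c b)))

/-- all components of all iterated covariant derivatives of the curvature are smooth
functions of `(x̂, q1)` -/
lemma covRAux_Sm : ∀ (m : ℕ) (fs : List (Fin (n+4))), fs.length ≤ m →
    ∀ a b c d : Fin (n+4), Sm (covRAux A a b c d fs) := by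
  intro m
  induction m with
  | zero =>
    intro fs hfs a b c d
    rw [List.length_eq_zero_iff.mp (Nat.le_zero.mp hfs)]
    exact (Rcurv_Sm a b c d).congr (fun x => by rw [covRAux])
  | succ m ih =>
    intro fs hfs a b c d
    match fs with
    | [] => exact (Rcurv_Sm a b c d).congr (fun x => by rw [covRAux])
    | f :: fs =>
      have hm : fs.length ≤ m := by
        simpa using Nat.succ_le_succ_iff.mp (by simpa using hfs)
      refine Rep.congr (T := πm n) ?_ (fun x => by rw [covRAux])
      refine (((((ih fs hm a b c d).pd f).add
        (Rep.sum _ _ fun l _ => (Γchr_Sm a f l).mul (ih fs hm l b c d))).sub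
        (Rep.sum _ _ fun l _ => (Γchr_Sm l f b).mul (ih fs hm a l c d))).sub
        (Rep.sum _ _ fun l _ => (Γchr_Sm l f c).mul (ih fs hm a b l d))).sub
        (Rep.sum _ _ fun l _ => (Γchr_Sm l f d).mul (ih fs hm a b c l))
        |>.sub (Rep.sum _ _ fun s _ => Rep.sum _ _ fun l _ =>
          (Γchr_Sm l f (fs.get s)).mul
            (ih (fs.set s l) (by rw [List.length_set]; exact hm) a b c d))

lemma covRAux_Sm' (fs : List (Fin (n+4))) (a b c d : Fin (n+4)) :
    Sm (covRAux A a b c d fs) := covRAux_Sm fs.length fs le_rfl a b c d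

end CurvSec
section VanishSec
variable {n N : ℕ} {A : Fin N → Matrix (Fin n) (Fin n) ℝ}

/-- components with upper index `q1` or `q2` vanish identically -/
lemma covR_upq : ∀ (m : ℕ) (fs : List (Fin (n+4))), fs.length ≤ m →
    ∀ (a : Fin (n+4)), (a = q1 n ∨ a = q2 n) → ∀ (b c d : Fin (n+4)) (x : Pt n),
      covRAux A a b c d fs x = 0 := by
  intro m
  induction m with
  | zero =>
    intro fs hfs a ha b c d x
    rw [List.length_eq_zero_iff.mp (Nat.le_zero.mp hfs), covRAux, Rcurv]
    have hup : ∀ (b' c' : Fin (n+4)) (y : Pt n), Γchr A a b' c' y = 0 := by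
      rcases ha with rfl | rfl
      · exact fun b' c' y => Γ_up_q1 b' c' y
      · exact fun b' c' y => Γ_up_q2 b' c' y
    rw [pd_of_eq_zero (hup d b) c x, pd_of_eq_zero (hup c b) d x,
      Finset.sum_eq_zero fun e _ => by rw [hup c e, hup d e]; ring]
    ring
  | succ m ih =>
    intro fs hfs a ha b c d x
    match fs with
    | [] => exact ih [] (by simp) a ha b c d x
    | f :: fs =>
      have hm : fs.length ≤ m := Nat.succ_le_succ_iff.mp (by simpa using hfs)
      have hup : ∀ (b' c' : Fin (n+4)) (y : Pt n), Γchr A a b' c' y = 0 := by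
        rcases ha with rfl | rfl
        · exact fun b' c' y => Γ_up_q1 b' c' y
        · exact fun b' c' y => Γ_up_q2 b' c' y
      rw [covRAux]
      rw [pd_of_eq_zero (fun y => ih fs hm a ha b c d y) f x,
        Finset.sum_eq_zero fun l _ => by rw [hup f l]; ring,
        Finset.sum_eq_zero fun l _ => by rw [ih fs hm a ha l c d x]; ring,
        Finset.sum_eq_zero fun l _ => by rw [ih fs hm a ha b l d x]; ring,
        Finset.sum_eq_zero fun l _ => by rw [ih fs hm a ha b c l x]; ring,
        Finset.sum_eq_zero fun s _ => Finset.sum_eq_zero fun l _ => by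
          rw [ih (fs.set s l) (by rw [List.length_set]; exact hm) a ha b c d x]; ring]
      ring

/-- components with second index `p1` or `p2` vanish identically -/
lemma covR_p2nd : ∀ (m : ℕ) (fs : List (Fin (n+4))), fs.length ≤ m →
    ∀ (b : Fin (n+4)), (b = p1 n ∨ b = p2 n) → ∀ (a c d : Fin (n+4)) (x : Pt n),
      covRAux A a b c d fs x = 0 := by
  intro m
  induction m with
  | zero =>
    intro fs hfs b hb a c d x
    rw [List.length_eq_zero_iff.mp (Nat.le_zero.mp hfs), covRAux, Rcurv]
    have hc : ∀ (a' b' : Fin (n+4)) (y : Pt n), Γchr A a' b' b y = 0 := by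
      rcases hb with rfl | rfl
      · exact fun a' b' y => Γ_c_p1 a' b' y
      · exact fun a' b' y => Γ_c_p2 a' b' y
    rw [pd_of_eq_zero (hc a d) c x, pd_of_eq_zero (hc a c) d x,
      Finset.sum_eq_zero fun e _ => by rw [hc e d, hc e c]; ring]
    ring
  | succ m ih =>
    intro fs hfs b hb a c d x
    match fs with
    | [] => exact ih [] (by simp) b hb a c d x
    | f :: fs =>
      have hm : fs.length ≤ m := Nat.succ_le_succ_iff.mp (by simpa using hfs)
      have hc : ∀ (a' b' : Fin (n+4)) (y : Pt n), Γchr A a' b' b y = 0 := by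
        rcases hb with rfl | rfl
        · exact fun a' b' y => Γ_c_p1 a' b' y
        · exact fun a' b' y => Γ_c_p2 a' b' y
      rw [covRAux]
      rw [pd_of_eq_zero (fun y => ih fs hm b hb a c d y) f x,
        Finset.sum_eq_zero fun l _ => by rw [ih fs hm b hb l c d x]; ring,
        Finset.sum_eq_zero fun l _ => by rw [hc l f]; ring,
        Finset.sum_eq_zero fun l _ => by rw [ih fs hm b hb a l d x]; ring,
        Finset.sum_eq_zero fun l _ => by rw [ih fs hm b hb a c l x]; ring,
        Finset.sum_eq_zero fun s _ => Finset.sum_eq_zero fun l _ => by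
          rw [ih (fs.set s l) (by rw [List.length_set]; exact hm) b hb a c d x]; ring]
      ring

/-- components with third index `p1` or `p2` vanish identically -/
lemma covR_p3rd : ∀ (m : ℕ) (fs : List (Fin (n+4))), fs.length ≤ m →
    ∀ (c : Fin (n+4)), (c = p1 n ∨ c = p2 n) → ∀ (a b d : Fin (n+4)) (x : Pt n),
      covRAux A a b c d fs x = 0 := by
  intro m
  induction m with
  | zero =>
    intro fs hfs c hc a b d x
    rw [List.length_eq_zero_iff.mp (Nat.le_zero.mp hfs), covRAux, Rcurv]
    have hΓb : ∀ (a' c' : Fin (n+4)) (y : Pt n), Γchr A a' c c' y = 0 := by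
      rcases hc with rfl | rfl
      · exact fun a' c' y => Γ_b_p1 a' c' y
      · exact fun a' c' y => Γ_b_p2 a' c' y
    have hpd : ∀ (g : Pt n → ℝ), Sm g → pd c g x = 0 := by
      rcases hc with rfl | rfl
      · exact fun g hg => hg.pd_p1 x
      · exact fun g hg => hg.pd_p2 x
    rw [hpd (Γchr A a d b) (Γchr_Sm a d b), pd_of_eq_zero (hΓb a b) d x,
      Finset.sum_eq_zero fun e _ => by rw [hΓb a e, hΓb e b]; ring]
    ring
  | succ m ih =>
    intro fs hfs c hc a b d x
    match fs with
    | [] => exact ih [] (by simp) c hc a b d x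
    | f :: fs =>
      have hm : fs.length ≤ m := Nat.succ_le_succ_iff.mp (by simpa using hfs)
      have hΓc : ∀ (a' b' : Fin (n+4)) (y : Pt n), Γchr A a' b' c y = 0 := by
        rcases hc with rfl | rfl
        · exact fun a' b' y => Γ_c_p1 a' b' y
        · exact fun a' b' y => Γ_c_p2 a' b' y
      rw [covRAux]
      rw [pd_of_eq_zero (fun y => ih fs hm c hc a b d y) f x,
        Finset.sum_eq_zero fun l _ => by rw [ih fs hm c hc l b d x]; ring,
        Finset.sum_eq_zero fun l _ => by rw [ih fs hm c hc a l d x]; ring,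
        Finset.sum_eq_zero fun l _ => by rw [hΓc l f]; ring,
        Finset.sum_eq_zero fun l _ => by rw [ih fs hm c hc a b l x]; ring,
        Finset.sum_eq_zero fun s _ => Finset.sum_eq_zero fun l _ => by
          rw [ih (fs.set s l) (by rw [List.length_set]; exact hm) c hc a b d x]; ring]
      ring

/-- components with fourth index `p1` or `p2` vanish identically -/
lemma covR_p4th : ∀ (m : ℕ) (fs : List (Fin (n+4))), fs.length ≤ m →
    ∀ (d : Fin (n+4)), (d = p1 n ∨ d = p2 n) → ∀ (a b c : Fin (n+4)) (x : Pt n),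
      covRAux A a b c d fs x = 0 := by
  intro m
  induction m with
  | zero =>
    intro fs hfs d hd a b c x
    rw [List.length_eq_zero_iff.mp (Nat.le_zero.mp hfs), covRAux, Rcurv]
    have hΓb : ∀ (a' c' : Fin (n+4)) (y : Pt n), Γchr A a' d c' y = 0 := by
      rcases hd with rfl | rfl
      · exact fun a' c' y => Γ_b_p1 a' c' y
      · exact fun a' c' y => Γ_b_p2 a' c' y
    have hpd : ∀ (g : Pt n → ℝ), Sm g → pd d g x = 0 := by
      rcases hd with rfl | rfl
      · exact fun g hg => hg.pd_p1 x
      · exact fun g hg => hg.pd_p2 x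
    rw [hpd (Γchr A a c b) (Γchr_Sm a c b), pd_of_eq_zero (hΓb a b) c x,
      Finset.sum_eq_zero fun e _ => by rw [hΓb a e, hΓb e b]; ring]
    ring
  | succ m ih =>
    intro fs hfs d hd a b c x
    match fs with
    | [] => exact ih [] (by simp) d hd a b c x
    | f :: fs =>
      have hm : fs.length ≤ m := Nat.succ_le_succ_iff.mp (by simpa using hfs)
      have hΓc : ∀ (a' b' : Fin (n+4)) (y : Pt n), Γchr A a' b' d y = 0 := by
        rcases hd with rfl | rfl
        · exact fun a' b' y => Γ_c_p1 a' b' y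
        · exact fun a' b' y => Γ_c_p2 a' b' y
      rw [covRAux]
      rw [pd_of_eq_zero (fun y => ih fs hm d hd a b c y) f x,
        Finset.sum_eq_zero fun l _ => by rw [ih fs hm d hd l b c x]; ring,
        Finset.sum_eq_zero fun l _ => by rw [ih fs hm d hd a l c x]; ring,
        Finset.sum_eq_zero fun l _ => by rw [ih fs hm d hd a b l x]; ring,
        Finset.sum_eq_zero fun l _ => by rw [hΓc l f]; ring,
        Finset.sum_eq_zero fun s _ => Finset.sum_eq_zero fun l _ => by
          rw [ih (fs.set s l) (by rw [List.length_set]; exact hm) d hd a b c x]; ring]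
      ring

/-- components with a derivative index `p1` or `p2` vanish identically -/
lemma covR_pfs : ∀ (m : ℕ) (fs : List (Fin (n+4))), fs.length ≤ m →
    (∃ g ∈ fs, g = p1 n ∨ g = p2 n) → ∀ (a b c d : Fin (n+4)) (x : Pt n),
      covRAux A a b c d fs x = 0 := by
  intro m
  induction m with
  | zero =>
    intro fs hfs hp a b c d x
    rw [List.length_eq_zero_iff.mp (Nat.le_zero.mp hfs)] at hp
    simp at hp
  | succ m ih =>
    intro fs hfs hp a b c d x
    match fs with
    | [] => simp at hp
    | f :: fs =>
      have hm : fs.length ≤ m := Nat.succ_le_succ_iff.mp (by simpa using hfs)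
      obtain ⟨g, hgmem, hgp⟩ := hp
      rw [List.mem_cons] at hgmem
      rcases hgmem with rfl | hgfs
      · -- the new derivative direction is p1/p2
        have hΓb : ∀ (a' c' : Fin (n+4)) (y : Pt n), Γchr A a' g c' y = 0 := by
          rcases hgp with rfl | rfl
          · exact fun a' c' y => Γ_b_p1 a' c' y
          · exact fun a' c' y => Γ_b_p2 a' c' y
        have hpd : ∀ (h : Pt n → ℝ), Sm h → pd g h x = 0 := by
          rcases hgp with rfl | rfl
          · exact fun h hh => hh.pd_p1 x
          · exact fun h hh => hh.pd_p2 x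
        rw [covRAux]
        rw [hpd (covRAux A a b c d fs) (covRAux_Sm' fs a b c d),
          Finset.sum_eq_zero fun l _ => by rw [hΓb a l]; ring,
          Finset.sum_eq_zero fun l _ => by rw [hΓb l b]; ring,
          Finset.sum_eq_zero fun l _ => by rw [hΓb l c]; ring,
          Finset.sum_eq_zero fun l _ => by rw [hΓb l d]; ring,
          Finset.sum_eq_zero fun s _ => Finset.sum_eq_zero fun l _ => by
            rw [hΓb l (fs.get s)]; ring]
        ring
      · -- the witness is in the tail
        have htail : ∃ g ∈ fs, g = p1 n ∨ g = p2 n := ⟨g, hgfs, hgp⟩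
        have h6 : ∑ s : Fin fs.length, ∑ l : Fin (n + 4),
            Γchr A l f (fs.get s) x * covRAux A a b c d (fs.set s l) x = 0 := by
          refine Finset.sum_eq_zero fun s _ => Finset.sum_eq_zero fun l _ => ?_
          by_cases hgs : fs.get s = p1 n ∨ fs.get s = p2 n
          · have : Γchr A l f (fs.get s) x = 0 := by
              rcases hgs with h | h
              · rw [h]; exact Γ_c_p1 l f x
              · rw [h]; exact Γ_c_p2 l f x
            rw [this]; ring
          · have hne : fs[s.1] ≠ g := by
              rw [← List.get_eq_getElem]
              intro h
              rcases hgp with rfl | rfl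
              · exact hgs (Or.inl h)
              · exact hgs (Or.inr h)
            have : g ∈ fs.set s.1 l := mem_set_of_ne hgfs s.isLt hne l
            rw [ih (fs.set s.1 l) (by rw [List.length_set]; exact hm) ⟨g, this, hgp⟩ a b c d x]
            ring
        rw [covRAux]
        rw [pd_of_eq_zero (fun y => ih fs hm htail a b c d y) f x,
          Finset.sum_eq_zero fun l _ => by rw [ih fs hm htail l b c d x]; ring,
          Finset.sum_eq_zero fun l _ => by rw [ih fs hm htail a l c d x]; ring,
          Finset.sum_eq_zero fun l _ => by rw [ih fs hm htail a b l d x]; ring,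
          Finset.sum_eq_zero fun l _ => by rw [ih fs hm htail a b c l x]; ring, h6]
        ring

end VanishSec
section ESec
variable {n N : ℕ} {A : Fin N → Matrix (Fin n) (Fin n) ℝ}

lemma Γ_e3rd_Sq (hA : ∀ α, (A α)ᵀ = -A α) (i : Fin n) (b : Fin (n+4)) (k : Fin n) :
    Sq (Γchr A (ehat i) b (ehat k)) := by
  by_cases hb : b = q2 n
  · subst hb
    exact (Bfun_Sq i k).congr (fun x => by rw [Γ_e3rd hA i (q2 n) k x, if_pos rfl])
  · exact (Rep.const _ 0).congr (fun x => by rw [Γ_e3rd hA i b k x, if_neg hb])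

lemma Γ_e3rd_ne_q2 (hA : ∀ α, (A α)ᵀ = -A α) {b : Fin (n+4)} (hb : b ≠ q2 n)
    (i k : Fin n) (x : Pt n) : Γchr A (ehat i) b (ehat k) x = 0 := by
  rw [Γ_e3rd hA i b k x, if_neg hb]

lemma Rcurv_e_Sq (hA : ∀ α, (A α)ᵀ = -A α) (i j : Fin n) (c d : Fin (n+4)) :
    Sq (Rcurv A (ehat i) (ehat j) c d) := by
  refine Rep.congr (T := ρm n)
    (g := fun x => pd c (Γchr A (ehat i) d (ehat j)) x - pd d (Γchr A (ehat i) c (ehat j)) x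
      + ∑ e : Fin (n + 4), (Γchr A (ehat i) c e x * Γchr A e d (ehat j) x
        - Γchr A (ehat i) d e x * Γchr A e c (ehat j) x)) ?_ (fun x => rfl)
  refine (((Γ_e3rd_Sq hA i d j).pd c).sub ((Γ_e3rd_Sq hA i c j).pd d)).add
    (Rep.sum _ _ fun e _ => ?_)
  rcases index_cases e with rfl | rfl | ⟨k, rfl⟩ | rfl | rfl
  · exact (Rep.const _ 0).congr (fun x => by rw [Γ_c_p1, Γ_c_p1]; ring)
  · exact (Rep.const _ 0).congr (fun x => by rw [Γ_c_p2, Γ_c_p2]; ring)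
  · exact ((Γ_e3rd_Sq hA i c k).mul (Γ_e3rd_Sq hA k d j)).sub
      ((Γ_e3rd_Sq hA i d k).mul (Γ_e3rd_Sq hA k c j))
  · exact (Rep.const _ 0).congr (fun x => by rw [Γ_up_q1, Γ_up_q1]; ring)
  · exact (Rep.const _ 0).congr (fun x => by rw [Γ_up_q2, Γ_up_q2]; ring)

lemma Rcurv_e_zero (hA : ∀ α, (A α)ᵀ = -A α) (i j : Fin n) {c d : Fin (n+4)}
    (h : isE c ∨ isE d) (x : Pt n) : Rcurv A (ehat i) (ehat j) c d x = 0 := by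
  rcases h with ⟨w, rfl⟩ | ⟨w, rfl⟩
  · rw [Rcurv]
    rw [(Γ_e3rd_Sq hA i d j).pd_ne_q1 (ehat_ne_q1 w) x,
      pd_of_eq_zero (fun y => Γ_e3rd_ne_q2 hA (ehat_ne_q2 w) i j y) d x,
      Finset.sum_eq_zero fun e _ => ?_]
    · ring
    rcases index_cases e with rfl | rfl | ⟨k, rfl⟩ | rfl | rfl
    · rw [Γ_c_p1, Γ_c_p1]; ring
    · rw [Γ_c_p2, Γ_c_p2]; ring
    · rw [Γ_e3rd_ne_q2 hA (ehat_ne_q2 w) i k x, Γ_e3rd_ne_q2 hA (ehat_ne_q2 w) k j x]; ring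
    · rw [Γ_up_q1, Γ_up_q1]; ring
    · rw [Γ_up_q2, Γ_up_q2]; ring
  · rw [Rcurv]
    rw [(Γ_e3rd_Sq hA i c j).pd_ne_q1 (ehat_ne_q1 w) x,
      pd_of_eq_zero (fun y => Γ_e3rd_ne_q2 hA (ehat_ne_q2 w) i j y) c x,
      Finset.sum_eq_zero fun e _ => ?_]
    · ring
    rcases index_cases e with rfl | rfl | ⟨k, rfl⟩ | rfl | rfl
    · rw [Γ_c_p1, Γ_c_p1]; ring
    · rw [Γ_c_p2, Γ_c_p2]; ring
    · rw [Γ_e3rd_ne_q2 hA (ehat_ne_q2 w) k j x, Γ_e3rd_ne_q2 hA (ehat_ne_q2 w) i k x]; ring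
    · rw [Γ_up_q1, Γ_up_q1]; ring
    · rw [Γ_up_q2, Γ_up_q2]; ring

/-- joint induction: components with the first two indices of `ehat` type are functions of
`q1` only, and they vanish whenever any of the remaining indices is of `ehat` type -/
lemma covR_E (hA : ∀ α, (A α)ᵀ = -A α) : ∀ (m : ℕ) (fs : List (Fin (n+4))), fs.length ≤ m →
    (∀ (i j : Fin n) (c d : Fin (n+4)), Sq (covRAux A (ehat i) (ehat j) c d fs)) ∧
    (∀ (i j : Fin n) (c d : Fin (n+4)),
      (isE c ∨ isE d ∨ ∃ g ∈ fs, isE g) → ∀ x : Pt n,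
        covRAux A (ehat i) (ehat j) c d fs x = 0) := by
  intro m
  induction m with
  | zero =>
    intro fs hfs
    rw [List.length_eq_zero_iff.mp (Nat.le_zero.mp hfs)]
    constructor
    · intro i j c d
      exact (Rcurv_e_Sq hA i j c d).congr (fun x => by rw [covRAux])
    · intro i j c d hw x
      rw [covRAux]
      rcases hw with h | h | ⟨g, hg, _⟩
      · exact Rcurv_e_zero hA i j (Or.inl h) x
      · exact Rcurv_e_zero hA i j (Or.inr h) x
      · simp at hg
  | succ m ih =>
    intro fs hfs
    match fs with
    | [] =>
      constructor
      · intro i j c d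
        exact (Rcurv_e_Sq hA i j c d).congr (fun x => by rw [covRAux])
      · intro i j c d hw x
        rw [covRAux]
        rcases hw with h | h | ⟨g, hg, _⟩
        · exact Rcurv_e_zero hA i j (Or.inl h) x
        · exact Rcurv_e_zero hA i j (Or.inr h) x
        · simp at hg
    | f :: fs =>
      have hm : fs.length ≤ m := Nat.succ_le_succ_iff.mp (by simpa using hfs)
      have IH1 : ∀ (fs' : List (Fin (n+4))), fs'.length ≤ m → ∀ (i j : Fin n) (c d : Fin (n+4)),
          Sq (covRAux A (ehat i) (ehat j) c d fs') := fun fs' h => (ih fs' h).1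
      have IH2 : ∀ (fs' : List (Fin (n+4))), fs'.length ≤ m → ∀ (i j : Fin n) (c d : Fin (n+4)),
          (isE c ∨ isE d ∨ ∃ g ∈ fs', isE g) → ∀ x : Pt n,
            covRAux A (ehat i) (ehat j) c d fs' x = 0 := fun fs' h => (ih fs' h).2
      constructor
      · -- Sq part
        intro i j c d
        refine Rep.congr (T := ρm n) ?_ (fun x => by rw [covRAux])
        refine (((((IH1 fs hm i j c d).pd f).add (Rep.sum _ _ fun l _ => ?_)).sub
          (Rep.sum _ _ fun l _ => ?_)).sub
          (Rep.sum _ _ fun l _ => ?_)).sub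
          (Rep.sum _ _ fun l _ => ?_)
          |>.sub (Rep.sum _ _ fun s _ => Rep.sum _ _ fun l _ => ?_)
        · -- T2 : Γ^î_{f l} · R^l_{ĵ c d}
          rcases index_cases l with rfl | rfl | ⟨k, rfl⟩ | rfl | rfl
          · exact (Rep.const _ 0).congr (fun x => by rw [Γ_c_p1]; ring)
          · exact (Rep.const _ 0).congr (fun x => by rw [Γ_c_p2]; ring)
          · exact (Γ_e3rd_Sq hA i f k).mul (IH1 fs hm k j c d)
          · exact (Rep.const _ 0).congr (fun x => by
              rw [covR_upq fs.length fs le_rfl (q1 n) (Or.inl rfl) (ehat j) c d x]; ring)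
          · exact (Rep.const _ 0).congr (fun x => by
              rw [covR_upq fs.length fs le_rfl (q2 n) (Or.inr rfl) (ehat j) c d x]; ring)
        · -- T3 : Γ^l_{f ĵ} · R^î_{l c d}
          rcases index_cases l with rfl | rfl | ⟨k, rfl⟩ | rfl | rfl
          · exact (Rep.const _ 0).congr (fun x => by
              rw [covR_p2nd fs.length fs le_rfl (p1 n) (Or.inl rfl) (ehat i) c d x]; ring)
          · exact (Rep.const _ 0).congr (fun x => by
              rw [covR_p2nd fs.length fs le_rfl (p2 n) (Or.inr rfl) (ehat i) c d x]; ring)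
          · exact (Γ_e3rd_Sq hA k f j).mul (IH1 fs hm i k c d)
          · exact (Rep.const _ 0).congr (fun x => by rw [Γ_up_q1]; ring)
          · exact (Rep.const _ 0).congr (fun x => by rw [Γ_up_q2]; ring)
        · -- T4 : Γ^l_{f c} · R^î_{ĵ l d}
          rcases index_cases l with rfl | rfl | ⟨k, rfl⟩ | rfl | rfl
          · exact (Rep.const _ 0).congr (fun x => by
              rw [covR_p3rd fs.length fs le_rfl (p1 n) (Or.inl rfl) (ehat i) (ehat j) d x]; ring)
          · exact (Rep.const _ 0).congr (fun x => by
              rw [covR_p3rd fs.length fs le_rfl (p2 n) (Or.inr rfl) (ehat i) (ehat j) d x]; ring)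
          · exact (Rep.const _ 0).congr (fun x => by
              rw [IH2 fs hm i j (ehat k) d (Or.inl ⟨k, rfl⟩) x]; ring)
          · exact (Rep.const _ 0).congr (fun x => by rw [Γ_up_q1]; ring)
          · exact (Rep.const _ 0).congr (fun x => by rw [Γ_up_q2]; ring)
        · -- T5 : Γ^l_{f d} · R^î_{ĵ c l}
          rcases index_cases l with rfl | rfl | ⟨k, rfl⟩ | rfl | rfl
          · exact (Rep.const _ 0).congr (fun x => by
              rw [covR_p4th fs.length fs le_rfl (p1 n) (Or.inl rfl) (ehat i) (ehat j) c x]; ring)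
          · exact (Rep.const _ 0).congr (fun x => by
              rw [covR_p4th fs.length fs le_rfl (p2 n) (Or.inr rfl) (ehat i) (ehat j) c x]; ring)
          · exact (Rep.const _ 0).congr (fun x => by
              rw [IH2 fs hm i j c (ehat k) (Or.inr (Or.inl ⟨k, rfl⟩)) x]; ring)
          · exact (Rep.const _ 0).congr (fun x => by rw [Γ_up_q1]; ring)
          · exact (Rep.const _ 0).congr (fun x => by rw [Γ_up_q2]; ring)
        · -- T6 : Γ^l_{f fs_s} · R^î_{ĵ c d; set}
          rcases index_cases l with rfl | rfl | ⟨k, rfl⟩ | rfl | rfl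
          · refine (Rep.const _ 0).congr (fun x => ?_)
            rw [covR_pfs (fs.set s (p1 n)).length (fs.set s (p1 n)) le_rfl
              ⟨p1 n, mem_set_self s.isLt (p1 n), Or.inl rfl⟩ (ehat i) (ehat j) c d x]
            ring
          · refine (Rep.const _ 0).congr (fun x => ?_)
            rw [covR_pfs (fs.set s (p2 n)).length (fs.set s (p2 n)) le_rfl
              ⟨p2 n, mem_set_self s.isLt (p2 n), Or.inr rfl⟩ (ehat i) (ehat j) c d x]
            ring
          · refine (Rep.const _ 0).congr (fun x => ?_)
            rw [IH2 (fs.set s (ehat k)) (by rw [List.length_set]; exact hm) i j c d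
              (Or.inr (Or.inr ⟨ehat k, mem_set_self s.isLt (ehat k), ⟨k, rfl⟩⟩)) x]
            ring
          · exact (Rep.const _ 0).congr (fun x => by rw [Γ_up_q1]; ring)
          · exact (Rep.const _ 0).congr (fun x => by rw [Γ_up_q2]; ring)
      · -- vanishing part
        intro i j c d hw x
        have h4 : ∑ l : Fin (n+4), Γchr A l f c x *
            covRAux A (ehat i) (ehat j) l d fs x = 0 := by
          refine Finset.sum_eq_zero fun l _ => ?_
          rcases index_cases l with rfl | rfl | ⟨k, rfl⟩ | rfl | rfl
          · rw [covR_p3rd fs.length fs le_rfl (p1 n) (Or.inl rfl) (ehat i) (ehat j) d x]; ring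
          · rw [covR_p3rd fs.length fs le_rfl (p2 n) (Or.inr rfl) (ehat i) (ehat j) d x]; ring
          · rw [IH2 fs hm i j (ehat k) d (Or.inl ⟨k, rfl⟩) x]; ring
          · rw [Γ_up_q1]; ring
          · rw [Γ_up_q2]; ring
        have h5 : ∑ l : Fin (n+4), Γchr A l f d x *
            covRAux A (ehat i) (ehat j) c l fs x = 0 := by
          refine Finset.sum_eq_zero fun l _ => ?_
          rcases index_cases l with rfl | rfl | ⟨k, rfl⟩ | rfl | rfl
          · rw [covR_p4th fs.length fs le_rfl (p1 n) (Or.inl rfl) (ehat i) (ehat j) c x]; ring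
          · rw [covR_p4th fs.length fs le_rfl (p2 n) (Or.inr rfl) (ehat i) (ehat j) c x]; ring
          · rw [IH2 fs hm i j c (ehat k) (Or.inr (Or.inl ⟨k, rfl⟩)) x]; ring
          · rw [Γ_up_q1]; ring
          · rw [Γ_up_q2]; ring
        have h6 : ∑ s : Fin fs.length, ∑ l : Fin (n+4), Γchr A l f (fs.get s) x *
            covRAux A (ehat i) (ehat j) c d (fs.set s l) x = 0 := by
          refine Finset.sum_eq_zero fun s _ => Finset.sum_eq_zero fun l _ => ?_
          rcases index_cases l with rfl | rfl | ⟨k, rfl⟩ | rfl | rfl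
          · rw [covR_pfs (fs.set s (p1 n)).length (fs.set s (p1 n)) le_rfl
              ⟨p1 n, mem_set_self s.isLt (p1 n), Or.inl rfl⟩ (ehat i) (ehat j) c d x]
            ring
          · rw [covR_pfs (fs.set s (p2 n)).length (fs.set s (p2 n)) le_rfl
              ⟨p2 n, mem_set_self s.isLt (p2 n), Or.inr rfl⟩ (ehat i) (ehat j) c d x]
            ring
          · rw [IH2 (fs.set s (ehat k)) (by rw [List.length_set]; exact hm) i j c d
              (Or.inr (Or.inr ⟨ehat k, mem_set_self s.isLt (ehat k), ⟨k, rfl⟩⟩)) x]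
            ring
          · rw [Γ_up_q1]; ring
          · rw [Γ_up_q2]; ring
        rcases hw with ⟨w, rfl⟩ | ⟨w, rfl⟩ | ⟨g, hg, hge⟩
        · -- witness in slot c
          rw [covRAux]
          rw [pd_of_eq_zero (fun y => IH2 fs hm i j (ehat w) d (Or.inl ⟨w, rfl⟩) y) f x,
            Finset.sum_eq_zero (fun l _ => ?_), Finset.sum_eq_zero (fun l _ => ?_), h4, h5, h6]
          · ring
          · -- T3
            rcases index_cases l with rfl | rfl | ⟨k, rfl⟩ | rfl | rfl
            · rw [covR_p2nd fs.length fs le_rfl (p1 n) (Or.inl rfl) (ehat i) (ehat w) d x]; ring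
            · rw [covR_p2nd fs.length fs le_rfl (p2 n) (Or.inr rfl) (ehat i) (ehat w) d x]; ring
            · rw [IH2 fs hm i k (ehat w) d (Or.inl ⟨w, rfl⟩) x]; ring
            · rw [Γ_up_q1]; ring
            · rw [Γ_up_q2]; ring
          · -- T2
            rcases index_cases l with rfl | rfl | ⟨k, rfl⟩ | rfl | rfl
            · rw [Γ_c_p1]; ring
            · rw [Γ_c_p2]; ring
            · rw [IH2 fs hm k j (ehat w) d (Or.inl ⟨w, rfl⟩) x]; ring
            · rw [covR_upq fs.length fs le_rfl (q1 n) (Or.inl rfl) (ehat j) (ehat w) d x]; ring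
            · rw [covR_upq fs.length fs le_rfl (q2 n) (Or.inr rfl) (ehat j) (ehat w) d x]; ring
        · -- witness in slot d
          rw [covRAux]
          rw [pd_of_eq_zero (fun y => IH2 fs hm i j c (ehat w) (Or.inr (Or.inl ⟨w, rfl⟩)) y) f x,
            Finset.sum_eq_zero (fun l _ => ?_), Finset.sum_eq_zero (fun l _ => ?_), h4, h5, h6]
          · ring
          · rcases index_cases l with rfl | rfl | ⟨k, rfl⟩ | rfl | rfl
            · rw [covR_p2nd fs.length fs le_rfl (p1 n) (Or.inl rfl) (ehat i) c (ehat w) x]; ring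
            · rw [covR_p2nd fs.length fs le_rfl (p2 n) (Or.inr rfl) (ehat i) c (ehat w) x]; ring
            · rw [IH2 fs hm i k c (ehat w) (Or.inr (Or.inl ⟨w, rfl⟩)) x]; ring
            · rw [Γ_up_q1]; ring
            · rw [Γ_up_q2]; ring
          · rcases index_cases l with rfl | rfl | ⟨k, rfl⟩ | rfl | rfl
            · rw [Γ_c_p1]; ring
            · rw [Γ_c_p2]; ring
            · rw [IH2 fs hm k j c (ehat w) (Or.inr (Or.inl ⟨w, rfl⟩)) x]; ring
            · rw [covR_upq fs.length fs le_rfl (q1 n) (Or.inl rfl) (ehat j) c (ehat w) x]; ring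
            · rw [covR_upq fs.length fs le_rfl (q2 n) (Or.inr rfl) (ehat j) c (ehat w) x]; ring
        · -- witness among the derivative indices
          rw [List.mem_cons] at hg
          rcases hg with rfl | hgfs
          · -- the new derivative direction is of ehat type
            obtain ⟨w, rfl⟩ := hge
            rw [covRAux]
            rw [(IH1 fs hm i j c d).pd_ne_q1 (ehat_ne_q1 w) x,
              Finset.sum_eq_zero (fun l _ => ?_), Finset.sum_eq_zero (fun l _ => ?_),
              h4, h5, h6]
            · ring
            · rcases index_cases l with rfl | rfl | ⟨k, rfl⟩ | rfl | rfl
              · rw [covR_p2nd fs.length fs le_rfl (p1 n) (Or.inl rfl) (ehat i) c d x]; ring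
              · rw [covR_p2nd fs.length fs le_rfl (p2 n) (Or.inr rfl) (ehat i) c d x]; ring
              · rw [Γ_e3rd_ne_q2 hA (ehat_ne_q2 w) k j x]; ring
              · rw [Γ_up_q1]; ring
              · rw [Γ_up_q2]; ring
            · rcases index_cases l with rfl | rfl | ⟨k, rfl⟩ | rfl | rfl
              · rw [Γ_c_p1]; ring
              · rw [Γ_c_p2]; ring
              · rw [Γ_e3rd_ne_q2 hA (ehat_ne_q2 w) i k x]; ring
              · rw [covR_upq fs.length fs le_rfl (q1 n) (Or.inl rfl) (ehat j) c d x]; ring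
              · rw [covR_upq fs.length fs le_rfl (q2 n) (Or.inr rfl) (ehat j) c d x]; ring
          · -- the witness is in the tail
            have htail : isE c ∨ isE d ∨ ∃ g ∈ fs, isE g := Or.inr (Or.inr ⟨g, hgfs, hge⟩)
            rw [covRAux]
            rw [pd_of_eq_zero (fun y => IH2 fs hm i j c d htail y) f x,
              Finset.sum_eq_zero (fun l _ => ?_), Finset.sum_eq_zero (fun l _ => ?_),
              h4, h5, h6]
            · ring
            · rcases index_cases l with rfl | rfl | ⟨k, rfl⟩ | rfl | rfl
              · rw [covR_p2nd fs.length fs le_rfl (p1 n) (Or.inl rfl) (ehat i) c d x]; ring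
              · rw [covR_p2nd fs.length fs le_rfl (p2 n) (Or.inr rfl) (ehat i) c d x]; ring
              · rw [IH2 fs hm i k c d htail x]; ring
              · rw [Γ_up_q1]; ring
              · rw [Γ_up_q2]; ring
            · rcases index_cases l with rfl | rfl | ⟨k, rfl⟩ | rfl | rfl
              · rw [Γ_c_p1]; ring
              · rw [Γ_c_p2]; ring
              · rw [IH2 fs hm k j c d htail x]; ring
              · rw [covR_upq fs.length fs le_rfl (q1 n) (Or.inl rfl) (ehat j) c d x]; ring
              · rw [covR_upq fs.length fs le_rfl (q2 n) (Or.inr rfl) (ehat j) c d x]; ring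

end ESec


/-- If `R^î_{ĵ,b,c;f_1;…;f_r} ≡ 0` for all `î, ĵ`, then `R^î_{ĵ,b,c;f_1;…;f_r;f} ≡ 0`
for every further index `f`. -/
theorem statement14 (n N : ℕ) (hn : 1 ≤ n) (hN : 1 ≤ N)
    (A : Fin N → Matrix (Fin n) (Fin n) ℝ) (hA : ∀ α, (A α)ᵀ = -A α) :
    ∀ (fs : List (Fin (n + 4))) (b c : Fin (n + 4)),
      (∀ (i j : Fin n) (x : Pt n), covR A (ehat i) (ehat j) b c fs x = 0) →
      ∀ (f : Fin (n + 4)) (i j : Fin n) (x : Pt n),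
        covR A (ehat i) (ehat j) b c (fs ++ [f]) x = 0 := by
  intro fs b c H f i j x
  have H' : ∀ (i j : Fin n) (y : Pt n),
      covRAux A (ehat i) (ehat j) b c fs.reverse y = 0 := fun i j y => H i j y
  show covRAux A (ehat i) (ehat j) b c (fs ++ [f]).reverse x = 0
  have hrev : (fs ++ [f]).reverse = f :: fs.reverse := by simp
  rw [hrev, covRAux]
  have h2 : ∑ l : Fin (n+4), Γchr A (ehat i) f l x *
      covRAux A l (ehat j) b c fs.reverse x = 0 := by
    refine Finset.sum_eq_zero fun l _ => ?_
    rcases index_cases l with rfl | rfl | ⟨k, rfl⟩ | rfl | rfl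
    · rw [Γ_c_p1]; ring
    · rw [Γ_c_p2]; ring
    · rw [H' k j x]; ring
    · rw [covR_upq fs.reverse.length fs.reverse le_rfl (q1 n) (Or.inl rfl) (ehat j) b c x]; ring
    · rw [covR_upq fs.reverse.length fs.reverse le_rfl (q2 n) (Or.inr rfl) (ehat j) b c x]; ring
  have h3 : ∑ l : Fin (n+4), Γchr A l f (ehat j) x *
      covRAux A (ehat i) l b c fs.reverse x = 0 := by
    refine Finset.sum_eq_zero fun l _ => ?_
    rcases index_cases l with rfl | rfl | ⟨k, rfl⟩ | rfl | rfl
    · rw [covR_p2nd fs.reverse.length fs.reverse le_rfl (p1 n) (Or.inl rfl) (ehat i) b c x]; ring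
    · rw [covR_p2nd fs.reverse.length fs.reverse le_rfl (p2 n) (Or.inr rfl) (ehat i) b c x]; ring
    · rw [H' i k x]; ring
    · rw [Γ_up_q1]; ring
    · rw [Γ_up_q2]; ring
  have h4 : ∑ l : Fin (n+4), Γchr A l f b x *
      covRAux A (ehat i) (ehat j) l c fs.reverse x = 0 := by
    refine Finset.sum_eq_zero fun l _ => ?_
    rcases index_cases l with rfl | rfl | ⟨k, rfl⟩ | rfl | rfl
    · rw [covR_p3rd fs.reverse.length fs.reverse le_rfl (p1 n) (Or.inl rfl)
        (ehat i) (ehat j) c x]; ring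
    · rw [covR_p3rd fs.reverse.length fs.reverse le_rfl (p2 n) (Or.inr rfl)
        (ehat i) (ehat j) c x]; ring
    · rw [(covR_E hA fs.reverse.length fs.reverse le_rfl).2 i j (ehat k) c
        (Or.inl ⟨k, rfl⟩) x]; ring
    · rw [Γ_up_q1]; ring
    · rw [Γ_up_q2]; ring
  have h5 : ∑ l : Fin (n+4), Γchr A l f c x *
      covRAux A (ehat i) (ehat j) b l fs.reverse x = 0 := by
    refine Finset.sum_eq_zero fun l _ => ?_
    rcases index_cases l with rfl | rfl | ⟨k, rfl⟩ | rfl | rfl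
    · rw [covR_p4th fs.reverse.length fs.reverse le_rfl (p1 n) (Or.inl rfl)
        (ehat i) (ehat j) b x]; ring
    · rw [covR_p4th fs.reverse.length fs.reverse le_rfl (p2 n) (Or.inr rfl)
        (ehat i) (ehat j) b x]; ring
    · rw [(covR_E hA fs.reverse.length fs.reverse le_rfl).2 i j b (ehat k)
        (Or.inr (Or.inl ⟨k, rfl⟩)) x]; ring
    · rw [Γ_up_q1]; ring
    · rw [Γ_up_q2]; ring
  have h6 : ∑ s : Fin fs.reverse.length, ∑ l : Fin (n+4),
      Γchr A l f (fs.reverse.get s) x *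
        covRAux A (ehat i) (ehat j) b c (fs.reverse.set s l) x = 0 := by
    refine Finset.sum_eq_zero fun s _ => Finset.sum_eq_zero fun l _ => ?_
    rcases index_cases l with rfl | rfl | ⟨k, rfl⟩ | rfl | rfl
    · rw [covR_pfs (fs.reverse.set s (p1 n)).length (fs.reverse.set s (p1 n)) le_rfl
        ⟨p1 n, mem_set_self s.isLt (p1 n), Or.inl rfl⟩ (ehat i) (ehat j) b c x]; ring
    · rw [covR_pfs (fs.reverse.set s (p2 n)).length (fs.reverse.set s (p2 n)) le_rfl
        ⟨p2 n, mem_set_self s.isLt (p2 n), Or.inr rfl⟩ (ehat i) (ehat j) b c x]; ring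
    · rw [(covR_E hA (fs.reverse.set s (ehat k)).length (fs.reverse.set s (ehat k)) le_rfl).2
        i j b c (Or.inr (Or.inr ⟨ehat k, mem_set_self s.isLt (ehat k), ⟨k, rfl⟩⟩)) x]; ring
    · rw [Γ_up_q1]; ring
    · rw [Γ_up_q2]; ring
  rw [pd_of_eq_zero (fun y => H' i j y) f x, h2, h3, h4, h5, h6]
  ring

end
end HolPaper
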